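/- For all λ>0, c>0, t>0, the absolutely continuous part of the ℝ⁴ Markov random flight density has total mass 1 − e^{-λt}: ∫_{‖x‖<ct} (λt/(π²(ct)⁴))[2 + λt(1 − ‖x‖²/(ct)²)] exp(−(λ/(c²t))‖x‖²) dx = 1 − e^{-λt}, the integral over the open ball of radius ct in ℝ⁴. -/

import Mathlib

/-! Integrating in polar coordinates (the unit sphere `S³` has area `2π²`) reduces the mass to
`∫₀ᴿ r³ (2 + a (R² - r²)) e^{-a r²} dr` with `R = ct`, `a = λ/(c²t)`, so `a R² = λt`. This
radial integrand has the elementary antiderivative `((r⁴ - R² r²)/2 - R²/(2a)) e^{-a r²}`, which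
takes the value `-R²/(2a)` at `r = 0` and `-R²/(2a) · e^{-λt}` at `r = R`. -/

open Real MeasureTheory Metric Set

section Radial

variable {E F : Type*} [NormedAddCommGroup E] [NormedSpace ℝ E] [FiniteDimensional ℝ E]
  [Nontrivial E] [MeasurableSpace E] [BorelSpace E] (μ : Measure E) [μ.IsAddHaarMeasure]
  [NormedAddCommGroup F] [NormedSpace ℝ F]

theorem setIntegral_ball_fun_norm_addHaar (f : ℝ → F) (r : ℝ) :
    ∫ x in ball (0 : E) r, f ‖x‖ ∂μ =
      Module.finrank ℝ E • μ.real (ball 0 1) •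
        ∫ y in Ioo 0 r, y ^ (Module.finrank ℝ E - 1) • f y := by
  have hball : ∀ x : E, (ball (0 : E) r).indicator (fun x => f ‖x‖) x = (Iio r).indicator f ‖x‖ :=
    fun x => by simp [indicator]
  have hIoo : ∀ y ∈ Ioi (0 : ℝ), y ^ (Module.finrank ℝ E - 1) • (Iio r).indicator f y =
      (Iio r).indicator (fun y => y ^ (Module.finrank ℝ E - 1) • f y) y :=
    fun y _ => by by_cases hy : y < r <;> simp [hy]
  rw [← integral_indicator measurableSet_ball, funext hball, integral_fun_norm_addHaar,
    setIntegral_congr_fun measurableSet_Ioi hIoo, setIntegral_indicator measurableSet_Iio,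
    Ioi_inter_Iio]

end Radial

theorem measureReal_ball_fin_four (r : ℝ) (hr : 0 ≤ r) :
    volume.real (ball (0 : EuclideanSpace ℝ (Fin 4)) r) = π ^ 2 / 2 * r ^ 4 := by
  rw [measureReal_def, InnerProductSpace.volume_ball_of_dim_even (k := 2) (by simp)]
  simp only [finrank_euclideanSpace, Fintype.card_fin, Nat.factorial_two, Nat.cast_ofNat,
    ENNReal.toReal_mul, ENNReal.toReal_pow, ENNReal.toReal_ofReal hr,
    ENNReal.toReal_ofReal (by positivity : 0 ≤ π ^ 2 / 2)]
  ring

theorem integral_ball_fin_four_fun_norm (f : ℝ → ℝ) (r : ℝ) :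
    ∫ x in ball (0 : EuclideanSpace ℝ (Fin 4)) r, f ‖x‖ =
      2 * π ^ 2 * ∫ y in Ioo 0 r, y ^ 3 * f y := by
  rw [setIntegral_ball_fun_norm_addHaar, measureReal_ball_fin_four 1 zero_le_one]
  simp only [finrank_euclideanSpace, Fintype.card_fin, one_pow, mul_one, Nat.add_one_sub_one,
    smul_eq_mul, nsmul_eq_mul, Nat.cast_ofNat]
  ring

theorem integral_cube_mul_flight_radial (a R : ℝ) (ha : a ≠ 0) :
    ∫ r in (0 : ℝ)..R, r ^ 3 * ((2 + a * (R ^ 2 - r ^ 2)) * exp (-a * r ^ 2)) =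
      R ^ 2 / (2 * a) * (1 - exp (-(a * R ^ 2))) := by
  have hderiv : ∀ r, HasDerivAt
      (fun r => ((r ^ 4 - R ^ 2 * r ^ 2) / 2 - R ^ 2 / (2 * a)) * exp (-a * r ^ 2))
      (r ^ 3 * ((2 + a * (R ^ 2 - r ^ 2)) * exp (-a * r ^ 2))) r := by
    intro r
    have hexp := ((hasDerivAt_pow 2 r).const_mul (-a)).exp
    have hpoly := (((hasDerivAt_pow 4 r).fun_sub
      ((hasDerivAt_pow 2 r).const_mul (R ^ 2))).div_const 2).sub_const (R ^ 2 / (2 * a))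
    refine (hpoly.fun_mul hexp).congr_deriv ?_
    push_cast
    field_simp
    ring
  rw [intervalIntegral.integral_eq_sub_of_hasDerivAt (fun r _ => hderiv r)
    ((by fun_prop : Continuous _).intervalIntegrable _ _)]
  simp only [neg_mul, zero_pow two_ne_zero, zero_pow four_ne_zero, mul_zero, exp_zero]
  field_simp
  ring

theorem fourD_flight_ac_mass (lam c t : ℝ) (hlam : 0 < lam) (hc : 0 < c) (ht : 0 < t) :
    (∫ x in Metric.ball (0 : EuclideanSpace ℝ (Fin 4)) (c * t),
        (lam * t / (π ^ 2 * (c * t) ^ 4)) *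
          (2 + lam * t * (1 - ‖x‖ ^ 2 / (c * t) ^ 2)) *
            Real.exp (-(lam / (c ^ 2 * t)) * ‖x‖ ^ 2)) = 1 - Real.exp (-(lam * t)) := by
  set R := c * t
  set a := lam / (c ^ 2 * t)
  have hR : 0 < R := by positivity
  have ha : 0 < a := by positivity
  have haR : a * R ^ 2 = lam * t := by simp only [a, R]; field_simp
  have hkernel : ∀ r : ℝ,
      lam * t / (π ^ 2 * R ^ 4) * (2 + lam * t * (1 - r ^ 2 / R ^ 2)) * exp (-a * r ^ 2) =
        lam * t / (π ^ 2 * R ^ 4) * ((2 + a * (R ^ 2 - r ^ 2)) * exp (-a * r ^ 2)) := by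
    intro r
    rw [← haR]
    field_simp
  simp_rw [hkernel]
  rw [integral_const_mul,
    integral_ball_fin_four_fun_norm (fun r => (2 + a * (R ^ 2 - r ^ 2)) * exp (-a * r ^ 2)),
    ← integral_Ioc_eq_integral_Ioo, ← intervalIntegral.integral_of_le hR.le,
    integral_cube_mul_flight_radial a R ha.ne', haR]
  field_simp
  linear_combination (exp (-(lam * t)) - 1) * haR
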